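/- In the Algorithm 1 setting, let F: [0,1]^n → [0,∞) be a nonnegative continuously differentiable DR-submodular function, and let q* ∈ Q, p* ∈ P satisfy q* + p* ≤ 1. Then for every integer 1 ≤ i ≤ 1/ε: ⟨p*⊙(1 − z⁽ⁱ⁻¹⁾), ∇F(z⁽ⁱ⁻¹⁾)⟩ ≥ (1−ε)^{i−1}·F(p*) − F(z⁽ⁱ⁻¹⁾) and q* + p*⊙(1 − y⁽ⁱ⁻¹⁾) ≤ 1 (i.e., the assignment a = q*, b = p* is a feasible solution of the linear program solved in iteration i of Algorithm 1). -/

import Mathlib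

open scoped InnerProductSpace
open Pointwise

noncomputable section

/-- Vectors in `ℝ^n`, with the Euclidean (ℓ₂) norm and inner product. -/
abbrev Vec (n : ℕ) := EuclideanSpace ℝ (Fin n)

/-- Membership in the box `[0,1]^n`. -/
def inBox {n : ℕ} (x : Vec n) : Prop := ∀ j, 0 ≤ x j ∧ x j ≤ 1

/-- Coordinate-wise (Hadamard) product `x ⊙ y`. -/
def had {n : ℕ} (x y : Vec n) : Vec n := WithLp.toLp 2 (fun j => x j * y j)

/-- Coordinate-wise probabilistic sum `x ⊛ y`. -/
def psum {n : ℕ} (x y : Vec n) : Vec n := WithLp.toLp 2 (fun j => x j + y j - x j * y j)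

/-- The vector `1 - x` (coordinate-wise). -/
def oneM {n : ℕ} (x : Vec n) : Vec n := WithLp.toLp 2 (fun j => 1 - x j)

/-- ℓ∞-norm. -/
def normInf {n : ℕ} (x : Vec n) : ℝ := ⨆ j, |x j|

/-- DR-submodularity of `F : [0,1]^n → ℝ`. -/
def DRSubmodular {n : ℕ} (F : Vec n → ℝ) : Prop :=
  ∀ a b : Vec n, inBox a → inBox b → (∀ j, a j ≤ b j) →
    ∀ k : ℝ, 0 < k → ∀ i : Fin n, inBox (b + EuclideanSpace.single i k) →
      F (b + EuclideanSpace.single i k) - F b ≤ F (a + EuclideanSpace.single i k) - F a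

/-- `P` is down-closed (with respect to the domain `[0,1]^n`). -/
def downClosed {n : ℕ} (P : Set (Vec n)) : Prop :=
  ∀ x y : Vec n, (∀ j, 0 ≤ x j) → (∀ j, x j ≤ y j) → y ∈ P → x ∈ P

/-- The Algorithm 1 setting: `Q ⊆ [0,1]^n` convex, `P ⊆ [0,1]^n` down-closed convex,
`ε ∈ (0,1)` with `1/ε = N ∈ ℕ`, and sequences `y⁽ⁱ⁾, z⁽ⁱ⁾` built from `a⁽ⁱ⁾ ∈ Q`,
`b⁽ⁱ⁾ ∈ P` satisfying `a⁽ⁱ⁾ + b⁽ⁱ⁾ ⊙ (1 − y⁽ⁱ⁻¹⁾) ≤ 1`, via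
`y⁽ⁱ⁾ = (1−ε)·y⁽ⁱ⁻¹⁾ + ε·a⁽ⁱ⁾` and `z⁽ⁱ⁾ = z⁽ⁱ⁻¹⁾ + ε·(1 − z⁽ⁱ⁻¹⁾) ⊙ b⁽ⁱ⁾`. -/
structure Alg1Setting {n : ℕ} (Q P : Set (Vec n)) (ε : ℝ) (N : ℕ)
    (y z a b : ℕ → Vec n) : Prop where
  hQbox : ∀ x ∈ Q, inBox x
  hQconv : Convex ℝ Q
  hPbox : ∀ x ∈ P, inBox x
  hPconv : Convex ℝ P
  hPdown : downClosed P
  hε0 : 0 < ε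
  hε1 : ε < 1
  hεN : (N : ℝ) * ε = 1
  hy0Q : y 0 ∈ Q
  hy0min : ∀ x ∈ Q, normInf (y 0) ≤ normInf x
  hz0 : z 0 = 0
  haQ : ∀ i, 1 ≤ i → i ≤ N → a i ∈ Q
  hbP : ∀ i, 1 ≤ i → i ≤ N → b i ∈ P
  hfeas : ∀ i, 1 ≤ i → i ≤ N → ∀ j, a i j + b i j * (1 - y (i-1) j) ≤ 1
  hyrec : ∀ i, 1 ≤ i → i ≤ N → y i = (1-ε) • y (i-1) + ε • a i
  hzrec : ∀ i, 1 ≤ i → i ≤ N → z i = z (i-1) + ε • had (oneM (z (i-1))) (b i)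

/-!
A DR-submodular function has a coordinatewise antitone gradient, so it is concave along every
segment with a nonnegative direction. Concavity on the segment from `z` to `z ⊛ p` bounds
`F (z ⊛ p) - F z` by `⟪p ⊙ (1 - z), ∇F z⟫`. Concavity on the ray from `p` in direction
`z ⊙ (1 - p)`, followed up to the point `p + (1/m) • z ⊙ (1 - p)` (still in the box when `z ≤ m`),
where `F ≥ 0`, gives `F (z ⊛ p) ≥ (1 - m) F p`. The iterates satisfy `1 - z⁽ⁱ⁾ ≥ (1 - ε)^i`, and
`y⁽ⁱ⁾ ∈ Q ⊆ [0,1]^n` by convexity, which gives feasibility.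
-/

section Coordinates

variable {n : ℕ}

@[simp] lemma had_apply (x y : Vec n) (j : Fin n) : had x y j = x j * y j := rfl

@[simp] lemma oneM_apply (x : Vec n) (j : Fin n) : oneM x j = 1 - x j := rfl

@[simp] lemma psum_apply (x y : Vec n) (j : Fin n) : psum x y j = x j + y j - x j * y j := rfl

lemma psum_sub_left (x y : Vec n) : psum x y - x = had y (oneM x) := by
  ext j; simp; ring

lemma psum_eq_add_had (x y : Vec n) : psum x y = y + had x (oneM y) := by
  ext j; simp; ring

lemma le_psum_left {x y : Vec n} (hx : inBox x) (hy : inBox y) (j : Fin n) : x j ≤ psum x y j := by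
  simp only [psum_apply]
  nlinarith [hy j, hx j]

lemma inBox_psum {x y : Vec n} (hx : inBox x) (hy : inBox y) : inBox (psum x y) := by
  intro j
  simp only [psum_apply]
  constructor <;> nlinarith [hx j, hy j]

lemma inBox_add_smul_of_mem_Icc {x d : Vec n} (hd : ∀ j, 0 ≤ d j) {s t r : ℝ}
    (hs : inBox (x + s • d)) (ht : inBox (x + t • d)) (hr : r ∈ Set.Icc s t) :
    inBox (x + r • d) := by
  intro j
  have hsr := mul_le_mul_of_nonneg_right hr.1 (hd j)
  have hrt := mul_le_mul_of_nonneg_right hr.2 (hd j)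
  have hsj := hs j
  have htj := ht j
  simp only [PiLp.add_apply, PiLp.smul_apply, smul_eq_mul] at hsj htj ⊢
  constructor <;> linarith

end Coordinates

lemma HasGradientAt.hasDerivAt_comp_add_smul {E : Type*} [NormedAddCommGroup E]
    [InnerProductSpace ℝ E] [CompleteSpace E] {F : E → ℝ} {g x d : E} {s : ℝ}
    (h : HasGradientAt F g (x + s • d)) :
    HasDerivAt (fun t : ℝ => F (x + t • d)) ⟪d, g⟫_ℝ s := by
  have hline : HasDerivAt (fun t : ℝ => x + t • d) d s := by
    simpa using ((hasDerivAt_id s).smul_const d).const_add x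
  have hcomp : HasDerivAt (F ∘ fun t : ℝ => x + t • d) ⟪g, d⟫_ℝ s := by
    simpa [InnerProductSpace.toDual_apply_apply] using h.hasFDerivAt.comp_hasDerivAt s hline
  rwa [real_inner_comm] at hcomp

namespace DRSubmodular

variable {n : ℕ} {F : Vec n → ℝ} {G : Vec n → Vec n}

lemma gradient_apply_le (hDR : DRSubmodular F) (hGrad : ∀ x, inBox x → HasGradientAt F (G x) x)
    {u v : Vec n} (hu : inBox u) (hv : inBox v) (huv : ∀ j, u j ≤ v j) {i : Fin n}
    (hi : u i < v i) : G v i ≤ G u i := by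
  set e : Vec n := EuclideanSpace.single i 1
  have he : ∀ (t : ℝ) (j : Fin n), (t • e) j = if j = i then t else 0 := by
    intro t j; by_cases hj : j = i <;> simp [e, hj]
  -- `φ t ≥ φ 0` for small `t > 0` is DR-submodularity at `u ≤ v - t eᵢ`.
  set φ : ℝ → ℝ := fun t => F (u + t • e) + F (v + t • -e)
  have hφ : HasDerivAt φ (G u i - G v i) 0 := by
    have hu' := HasGradientAt.hasDerivAt_comp_add_smul (d := e) (s := 0)
      (by simpa using hGrad u hu)
    have hv' := HasGradientAt.hasDerivAt_comp_add_smul (d := -e) (s := 0)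
      (by simpa using hGrad v hv)
    refine (hu'.add hv').congr_deriv ?_
    simp [e, EuclideanSpace.inner_single_left, sub_eq_add_neg]
  have hslope : ∀ᶠ t in nhdsWithin 0 (Set.Ioi 0), 0 ≤ slope φ 0 t := by
    filter_upwards [Ioo_mem_nhdsGT (sub_pos.2 hi)] with t ht
    set w : Vec n := v + t • -e
    have hw : ∀ j, w j = v j - if j = i then t else 0 := by
      intro j; simp only [w, PiLp.add_apply, smul_neg, PiLp.neg_apply, he]; ring
    have hwe : w + EuclideanSpace.single i t = v := by
      ext j; rw [PiLp.add_apply, hw]; by_cases hj : j = i <;> simp [hj]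
    have hwbox : inBox w := by
      intro j; rw [hw]; by_cases hj : j = i
      · subst hj; simp only [if_true]; constructor <;> linarith [hu j, hv j, ht.1, ht.2]
      · simpa [hj] using hv j
    have huw : ∀ j, u j ≤ w j := by
      intro j; rw [hw]; by_cases hj : j = i
      · subst hj; simp only [if_true]; linarith [ht.2]
      · simpa [hj] using huv j
    have hdr := hDR u w hu hwbox huw t ht.1 i (hwe ▸ hv)
    have hue : u + t • e = u + EuclideanSpace.single i t := by
      congr 1; ext j; rw [he]; by_cases hj : j = i <;> simp [hj]
    rw [hwe] at hdr
    rw [slope_def_field]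
    apply div_nonneg _ (by linarith [ht.1])
    simp only [φ, zero_smul, add_zero, hue]
    linarith
  have hlim := (hasDerivAt_iff_tendsto_slope.1 hφ).mono_left
    (nhdsWithin_mono 0 fun t (ht : t ∈ Set.Ioi (0 : ℝ)) => ne_of_gt ht)
  linarith [ge_of_tendsto hlim hslope]

lemma inner_gradient_antitoneOn (hDR : DRSubmodular F)
    (hGrad : ∀ x, inBox x → HasGradientAt F (G x) x) {x d : Vec n} (hd : ∀ j, 0 ≤ d j)
    {s t : ℝ} (hs : inBox (x + s • d)) (ht : inBox (x + t • d)) :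
    AntitoneOn (fun r => ⟪d, G (x + r • d)⟫_ℝ) (Set.Icc s t) := by
  intro r hr r' hr' hrr'
  simp only [PiLp.inner_apply, RCLike.inner_apply, conj_trivial]
  refine Finset.sum_le_sum fun j _ => ?_
  rcases (hd j).eq_or_lt with hdj | hdj
  · simp [← hdj]
  rcases hrr'.eq_or_lt with rfl | hlt
  · rfl
  have hle : ∀ k, (x + r • d) k ≤ (x + r' • d) k := fun k => by
    simpa using mul_le_mul_of_nonneg_right hrr' (hd k)
  have hlt : (x + r • d) j < (x + r' • d) j := by
    simpa using mul_lt_mul_of_pos_right hlt hdj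
  exact mul_le_mul_of_nonneg_right
    (hDR.gradient_apply_le hGrad (inBox_add_smul_of_mem_Icc hd hs ht hr)
      (inBox_add_smul_of_mem_Icc hd hs ht hr') hle hlt) hdj.le

lemma concaveOn_comp_add_smul (hDR : DRSubmodular F)
    (hGrad : ∀ x, inBox x → HasGradientAt F (G x) x) {x d : Vec n} (hd : ∀ j, 0 ≤ d j)
    {s t : ℝ} (hs : inBox (x + s • d)) (ht : inBox (x + t • d)) :
    ConcaveOn ℝ (Set.Icc s t) (fun r => F (x + r • d)) := by
  have hderiv : ∀ r ∈ Set.Icc s t,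
      HasDerivAt (fun r => F (x + r • d)) ⟪d, G (x + r • d)⟫_ℝ r := fun r hr =>
    (hGrad _ (inBox_add_smul_of_mem_Icc hd hs ht hr)).hasDerivAt_comp_add_smul
  refine AntitoneOn.concaveOn_of_deriv (convex_Icc s t)
    (fun r hr => (hderiv r hr).continuousAt.continuousWithinAt)
    (fun r hr => (hderiv r (interior_subset hr)).differentiableAt.differentiableWithinAt) ?_
  intro r hr r' hr' hrr'
  rw [(hderiv r (interior_subset hr)).deriv, (hderiv r' (interior_subset hr')).deriv]
  exact hDR.inner_gradient_antitoneOn hGrad hd hs ht (interior_subset hr) (interior_subset hr')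
    hrr'

lemma sub_le_inner_gradient (hDR : DRSubmodular F)
    (hGrad : ∀ x, inBox x → HasGradientAt F (G x) x) {z w : Vec n} (hz : inBox z)
    (hw : inBox w) (hzw : ∀ j, z j ≤ w j) : F w - F z ≤ ⟪w - z, G z⟫_ℝ := by
  have hd : ∀ j, 0 ≤ (w - z) j := fun j => by simpa using hzw j
  have hconc := hDR.concaveOn_comp_add_smul hGrad hd (s := 0) (t := 1) (by simpa using hz)
    (by simpa using hw)
  have hslope := hconc.slope_le_of_hasDerivAt (by simp) (by simp) zero_lt_one
    (HasGradientAt.hasDerivAt_comp_add_smul (by simpa using hGrad z hz))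
  simpa [slope_def_field] using hslope

lemma mul_le_apply_psum (hDR : DRSubmodular F) (hGrad : ∀ x, inBox x → HasGradientAt F (G x) x)
    (hF0 : ∀ x, inBox x → 0 ≤ F x) {z p : Vec n} (hz : inBox z) (hp : inBox p) {m : ℝ}
    (hm0 : 0 ≤ m) (hm1 : m < 1) (hzm : ∀ j, z j ≤ m) : (1 - m) * F p ≤ F (psum z p) := by
  rcases hm0.eq_or_lt with rfl | hmpos
  · have hz0 : z = 0 := by ext j; exact le_antisymm (hzm j) (hz j).1
    simp [hz0, psum]
  set d : Vec n := had z (oneM p)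
  have hd : ∀ j, 0 ≤ d j := fun j => mul_nonneg (hz j).1 (by simp [(hp j).2])
  have hfar : inBox (p + m⁻¹ • d) := by
    intro j
    have hdj : m⁻¹ * d j ≤ 1 - p j := by
      rw [inv_mul_le_iff₀ hmpos]
      exact mul_le_mul_of_nonneg_right (hzm j) (by simp [(hp j).2])
    simp only [PiLp.add_apply, PiLp.smul_apply, smul_eq_mul]
    constructor <;> nlinarith [hp j, hd j, inv_pos.2 hmpos]
  have hconc := hDR.concaveOn_comp_add_smul hGrad hd (s := 0) (by simpa using hp) hfar
  have hcomb := hconc.2 (show (0 : ℝ) ∈ Set.Icc 0 m⁻¹ by simp [hmpos.le])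
    (show m⁻¹ ∈ Set.Icc 0 m⁻¹ by simp [hmpos.le]) (show 0 ≤ 1 - m by linarith) hmpos.le (by ring)
  simp only [smul_eq_mul, mul_zero, zero_add, mul_inv_cancel₀ hmpos.ne', zero_smul, add_zero,
    one_smul] at hcomb
  rw [psum_eq_add_had]
  nlinarith [hF0 _ hfar]

end DRSubmodular

namespace Alg1Setting

variable {n N : ℕ} {Q P : Set (Vec n)} {ε : ℝ} {y z a b : ℕ → Vec n}

lemma y_mem (H : Alg1Setting Q P ε N y z a b) : ∀ i ≤ N, y i ∈ Q := by
  intro i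
  induction i with
  | zero => exact fun _ => H.hy0Q
  | succ i ih =>
    intro hi
    rw [H.hyrec (i + 1) (by omega) hi]
    exact H.hQconv (ih (by omega)) (H.haQ (i + 1) (by omega) hi) (by linarith [H.hε1])
      H.hε0.le (by ring)

lemma z_bounds (H : Alg1Setting Q P ε N y z a b) :
    ∀ i ≤ N, ∀ j, 0 ≤ z i j ∧ (1 - ε) ^ i ≤ 1 - z i j := by
  intro i
  induction i with
  | zero => simp [H.hz0]
  | succ i ih =>
    intro hi j
    obtain ⟨hz0, hz1⟩ := ih (by omega) j
    obtain ⟨hb0, hb1⟩ := H.hPbox _ (H.hbP (i + 1) (by omega) hi) j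
    have hpow : 0 ≤ (1 - ε) ^ i := pow_nonneg (by linarith [H.hε1]) i
    have hrec : 1 - z (i + 1) j = (1 - z i j) * (1 - ε * b (i + 1) j) := by
      rw [H.hzrec (i + 1) (by omega) hi]; simp; ring
    have hrec' : z (i + 1) j = z i j + ε * ((1 - z i j) * b (i + 1) j) := by linarith
    have hεb : 1 - ε ≤ 1 - ε * b (i + 1) j := by nlinarith [H.hε0]
    constructor
    · rw [hrec']
      have := mul_nonneg H.hε0.le (mul_nonneg (by linarith : 0 ≤ 1 - z i j) hb0)
      linarith
    · rw [hrec, pow_succ]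
      exact mul_le_mul hz1 hεb (by linarith [H.hε1]) (by linarith)

end Alg1Setting

theorem stmt_4_general {n : ℕ} (Q P : Set (Vec n)) (ε : ℝ) (N : ℕ) (y z a b : ℕ → Vec n)
    (H : Alg1Setting Q P ε N y z a b)
    (F : Vec n → ℝ) (G : Vec n → Vec n)
    (hF0 : ∀ x, inBox x → 0 ≤ F x)
    (hDR : DRSubmodular F)
    (hGrad : ∀ x, inBox x → HasGradientAt F (G x) x)
    (q p : Vec n) (hp : p ∈ P) (hqp : ∀ j, q j + p j ≤ 1) :
    ∀ i, 1 ≤ i → i ≤ N →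
      ((1 - ε)^(i-1) * F p - F (z (i-1)) ≤
        ⟪had p (oneM (z (i-1))), G (z (i-1))⟫_ℝ) ∧
      (∀ j, q j + p j * (1 - y (i-1) j) ≤ 1) := by
  intro i hi hiN
  have hpbox := H.hPbox p hp
  have hzb := H.z_bounds (i - 1) (by omega)
  have hpow : 0 < (1 - ε) ^ (i - 1) := pow_pos (by linarith [H.hε1]) _
  have hpow1 : (1 - ε) ^ (i - 1) ≤ 1 := pow_le_one₀ (by linarith [H.hε1]) (by linarith [H.hε0])
  have hzbox : inBox (z (i - 1)) := fun j => ⟨(hzb j).1, by linarith [(hzb j).2]⟩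
  constructor
  · have hlower := hDR.mul_le_apply_psum hGrad hF0 hzbox hpbox (m := 1 - (1 - ε) ^ (i - 1))
      (by linarith) (by linarith)
      (fun j => by linarith [(hzb j).2])
    have hupper := hDR.sub_le_inner_gradient hGrad hzbox (inBox_psum hzbox hpbox)
      (le_psum_left hzbox hpbox)
    rw [psum_sub_left] at hupper
    linarith
  · intro j
    have hy := H.hQbox _ (H.y_mem (i - 1) (by omega)) j
    nlinarith [hpbox j, hqp j]

/-- Lemma 4.4 / `lem:feasible_solution`: in the Algorithm 1 setting, for a
nonnegative continuously differentiable DR-submodular `F` with gradient `G`, and `q* ∈ Q`,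
`p* ∈ P` with `q* + p* ≤ 1`, for every `1 ≤ i ≤ 1/ε`:
`⟪p* ⊙ (1 − z⁽ⁱ⁻¹⁾), ∇F(z⁽ⁱ⁻¹⁾)⟫ ≥ (1−ε)^{i−1}·F(p*) − F(z⁽ⁱ⁻¹⁾)` and
`q* + p* ⊙ (1 − y⁽ⁱ⁻¹⁾) ≤ 1`. -/
theorem stmt_4 {n : ℕ} (Q P : Set (Vec n)) (ε : ℝ) (N : ℕ) (y z a b : ℕ → Vec n)
    (H : Alg1Setting Q P ε N y z a b)
    (F : Vec n → ℝ) (G : Vec n → Vec n)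
    (hF0 : ∀ x, inBox x → 0 ≤ F x)
    (hDR : DRSubmodular F)
    (hGrad : ∀ x, inBox x → HasGradientAt F (G x) x)
    (hGcont : ContinuousOn G {x : Vec n | inBox x})
    (q p : Vec n) (hq : q ∈ Q) (hp : p ∈ P) (hqp : ∀ j, q j + p j ≤ 1) :
    ∀ i, 1 ≤ i → i ≤ N →
      ((1 - ε)^(i-1) * F p - F (z (i-1)) ≤
        ⟪had p (oneM (z (i-1))), G (z (i-1))⟫_ℝ) ∧
      (∀ j, q j + p j * (1 - y (i-1) j) ≤ 1) :=
  stmt_4_general Q P ε N y z a b H F G hF0 hDR hGrad q p hp hqp
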